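/- arXiv:1911.07579 — 3 statements merged into one kernel-verified Lean document; each statement's English description precedes it below -/
import Mathlib

section
/- For every real q ≥ 2, every t > 0 and every x ∈ ℝ^d, writing a = e^{−t} ∈ (0,1), one has ∫_{ℝ^d} p_t(x,y)^q dμ(y) ≤ (1 − a²)^{−(q−1)d/2} · e^{(q−1)|x|²/2}. -/
open MeasureTheory ProbabilityTheory Filter Set

noncomputable def stdGaussian (d : ℕ) : Measure (EuclideanSpace ℝ (Fin d)) :=
  (volume : Measure (EuclideanSpace ℝ (Fin d))).withDensity
    (fun x => ENNReal.ofReal ((2 * Real.pi) ^ (-(d : ℝ) / 2) * Real.exp (-‖x‖ ^ 2 / 2)))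

/-- `p`-th power of the Kantorovich distance, as an extended real. -/
noncomputable def wassersteinPow (d : ℕ) (p : ℝ)
    (ν μ : Measure (EuclideanSpace ℝ (Fin d))) : ENNReal :=
  ⨅ (π : Measure (EuclideanSpace ℝ (Fin d) × EuclideanSpace ℝ (Fin d)))
    (_ : π.map Prod.fst = ν) (_ : π.map Prod.snd = μ),
      ∫⁻ z, ENNReal.ofReal (‖z.1 - z.2‖ ^ p) ∂π

noncomputable def wasserstein (d : ℕ) (p : ℝ)
    (ν μ : Measure (EuclideanSpace ℝ (Fin d))) : ENNReal :=
  (wassersteinPow d p ν μ) ^ (1 / p)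

noncomputable def empMeasure {Ω : Type*} {d n : ℕ}
    (X : Fin n → Ω → EuclideanSpace ℝ (Fin d)) (ω : Ω) :
    Measure (EuclideanSpace ℝ (Fin d)) :=
  (n : ENNReal)⁻¹ • ∑ i, Measure.dirac (X i ω)

noncomputable def mehler (d : ℕ) (t : ℝ) (x y : EuclideanSpace ℝ (Fin d)) : ℝ :=
  (1 - Real.exp (-2 * t)) ^ (-(d : ℝ) / 2) *
    Real.exp (-(Real.exp (-2 * t) / (2 * (1 - Real.exp (-2 * t)))) *
      (‖x‖ ^ 2 + ‖y‖ ^ 2 - 2 * Real.exp t * inner ℝ x y))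

noncomputable def ouSemigroup (d : ℕ) (t : ℝ) (f : EuclideanSpace ℝ (Fin d) → ℝ)
    (x : EuclideanSpace ℝ (Fin d)) : ℝ :=
  ∫ y, f (Real.exp (-t) • x + Real.sqrt (1 - Real.exp (-2 * t)) • y) ∂(stdGaussian d)

/-- `(-L)⁻¹ g = ∫_0^∞ P_s g ds` for mean-zero `g`. -/
noncomputable def invL (d : ℕ) (g : EuclideanSpace ℝ (Fin d) → ℝ)
    (x : EuclideanSpace ℝ (Fin d)) : ℝ :=
  ∫ s in Set.Ioi (0 : ℝ), ouSemigroup d s g x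

noncomputable def negSobolevNorm (d : ℕ) (p : ℝ)
    (g : EuclideanSpace ℝ (Fin d) → ℝ) : ℝ :=
  (∫ x, ‖fderiv ℝ (invL d g) x‖ ^ p ∂(stdGaussian d)) ^ (1 / p)

noncomputable def gaussianPerimeter (d : ℕ) (A : Set (EuclideanSpace ℝ (Fin d))) : ENNReal :=
  Filter.limsup
    (fun ε => ∫⁻ x, ‖fderiv ℝ (ouSemigroup d ε (A.indicator fun _ => (1 : ℝ))) x‖₊ ∂(stdGaussian d))
    (nhdsWithin 0 (Set.Ioi (0 : ℝ)))

/-! With `a = e^{-t}`, the Gaussian density times `p_t(x, ·)^q` is a constant times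
`exp (-β |y|² + c ⟪x, y⟫)` with `β = (1 + (q-1) a²) / (2 (1 - a²))` and `c = q a / (1 - a²)`, so the
integral can be computed in closed form:
`(1 - a²)^{-(q-1)d/2} (1 + (q-1) a²)^{-d/2} exp (q (q-1) a² |x|² / (2 (1 + (q-1) a²)))`.
The bound follows from `1 + (q-1) a² ≥ 1` and `q a² ≤ 1 + (q-1) a²`. -/

open Real
open scoped RealInnerProductSpace

section GaussianIntegral

variable {V : Type*} [NormedAddCommGroup V] [InnerProductSpace ℝ V] [FiniteDimensional ℝ V]
  [MeasurableSpace V] [BorelSpace V]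

theorem integrable_rexp_neg_mul_sq_norm_add {b : ℝ} (hb : 0 < b) (c : ℝ) (w : V) :
    Integrable (fun v : V => rexp (-b * ‖v‖ ^ 2 + c * ⟪w, v⟫)) := by
  convert (GaussianFourier.integrable_cexp_neg_mul_sq_norm_add (V := V) (b := b)
    (by simpa) c w).re using 2 with v
  rw [← Complex.exp_ofReal_re]
  push_cast
  rfl

theorem integral_rexp_neg_mul_sq_norm_add {b : ℝ} (hb : 0 < b) (c : ℝ) (w : V) :
    ∫ v : V, rexp (-b * ‖v‖ ^ 2 + c * ⟪w, v⟫) =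
      (π / b) ^ (Module.finrank ℝ V / 2 : ℝ) * rexp (c ^ 2 * ‖w‖ ^ 2 / (4 * b)) := by
  rw [← Complex.ofReal_inj, ← integral_complex_ofReal]
  push_cast
  rw [GaussianFourier.integral_cexp_neg_mul_sq_norm_add (by simpa) c w, ← Complex.ofReal_div,
    Complex.ofReal_cpow (by positivity)]
  push_cast
  rfl

end GaussianIntegral

theorem two_pi_rpow_mul_rpow_mul_pi_div_rpow {b S : ℝ} (hb : 0 < b) (hS : 0 < S) (d q : ℝ) :
    (2 * π) ^ (-d / 2) * b ^ (-d / 2 * q) * (π / (S / (2 * b))) ^ (d / 2) =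
      b ^ (-((q - 1) * d) / 2) * S ^ (-d / 2) := by
  have h2π : 0 < 2 * π := by positivity
  rw [show π / (S / (2 * b)) = 2 * π * b / S by field_simp, Real.div_rpow (by positivity) hS.le,
    Real.mul_rpow h2π.le hb.le, show -((q - 1) * d) / 2 = -d / 2 * q + d / 2 by ring,
    Real.rpow_add hb, neg_div, Real.rpow_neg h2π.le, Real.rpow_neg hS.le]
  field_simp

theorem one_sub_exp_neg_sq_pos {t : ℝ} (ht : 0 < t) : 0 < 1 - rexp (-t) ^ 2 := by
  have : rexp (-t) < 1 := Real.exp_lt_one_iff.mpr (by linarith)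
  nlinarith [Real.exp_pos (-t)]

section Mehler

variable {d : ℕ}

theorem mehler_eq (t : ℝ) (x y : EuclideanSpace ℝ (Fin d)) :
    mehler d t x y = (1 - rexp (-t) ^ 2) ^ (-(d : ℝ) / 2) *
      rexp (-(rexp (-t) ^ 2 / (2 * (1 - rexp (-t) ^ 2))) * (‖x‖ ^ 2 + ‖y‖ ^ 2) +
        rexp (-t) / (1 - rexp (-t) ^ 2) * ⟪x, y⟫) := by
  have h2t : rexp (-2 * t) = rexp (-t) ^ 2 := by rw [← Real.exp_nat_mul]; ring_nf
  have ht : rexp t * rexp (-t) = 1 := by rw [← Real.exp_add]; simp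
  rw [mehler, h2t]
  congr 2
  generalize 1 - rexp (-t) ^ 2 = b
  linear_combination (rexp (-t) / b * ⟪x, y⟫) * ht

theorem gaussianDensity_mul_mehler_rpow (q : ℝ) {t : ℝ} (ht : 0 < t)
    (x y : EuclideanSpace ℝ (Fin d)) :
    (2 * π) ^ (-(d : ℝ) / 2) * rexp (-‖y‖ ^ 2 / 2) * mehler d t x y ^ q =
      (2 * π) ^ (-(d : ℝ) / 2) * (1 - rexp (-t) ^ 2) ^ (-(d : ℝ) / 2 * q) *
        rexp (-(q * rexp (-t) ^ 2 / (2 * (1 - rexp (-t) ^ 2))) * ‖x‖ ^ 2) *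
        rexp (-((1 + (q - 1) * rexp (-t) ^ 2) / (2 * (1 - rexp (-t) ^ 2))) * ‖y‖ ^ 2 +
          q * rexp (-t) / (1 - rexp (-t) ^ 2) * ⟪x, y⟫) := by
  have hb := one_sub_exp_neg_sq_pos ht
  rw [mehler_eq, Real.mul_rpow (Real.rpow_nonneg hb.le _) (Real.exp_nonneg _),
    ← Real.rpow_mul hb.le, ← Real.exp_mul, mul_assoc, mul_assoc, mul_assoc, ← Real.exp_add,
    mul_left_comm (rexp _),
    ← Real.exp_add]
  congr 3
  field_simp
  ring

theorem lintegral_mehler_rpow {q t : ℝ} (hq : 0 ≤ q) (ht : 0 < t)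
    (x : EuclideanSpace ℝ (Fin d)) :
    ∫⁻ y, ENNReal.ofReal (mehler d t x y ^ q) ∂(stdGaussian d) =
      ENNReal.ofReal ((1 - rexp (-t) ^ 2) ^ (-((q - 1) * d) / 2) *
        (1 + (q - 1) * rexp (-t) ^ 2) ^ (-(d : ℝ) / 2) *
        rexp (q * (q - 1) * rexp (-t) ^ 2 * ‖x‖ ^ 2 /
          (2 * (1 + (q - 1) * rexp (-t) ^ 2)))) := by
  have hb := one_sub_exp_neg_sq_pos ht
  have hS : 0 < 1 + (q - 1) * rexp (-t) ^ 2 := by nlinarith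
  have hβ : 0 < (1 + (q - 1) * rexp (-t) ^ 2) / (2 * (1 - rexp (-t) ^ 2)) := by positivity
  rw [_root_.stdGaussian, lintegral_withDensity_eq_lintegral_mul _ (by fun_prop)
    (by unfold mehler; fun_prop)]
  simp only [Pi.mul_apply]
  simp_rw [← ENNReal.ofReal_mul
    (by positivity : (0 : ℝ) ≤ (2 * π) ^ (-(d : ℝ) / 2) * rexp (-‖_‖ ^ 2 / 2)),
    gaussianDensity_mul_mehler_rpow q ht]
  rw [← ofReal_integral_eq_lintegral_ofReal
    ((integrable_rexp_neg_mul_sq_norm_add hβ _ x).const_mul _)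
    (Filter.Eventually.of_forall fun y => by positivity), integral_const_mul,
    integral_rexp_neg_mul_sq_norm_add hβ, finrank_euclideanSpace_fin]
  congr 1
  generalize rexp (-t) = a at hb hS hβ ⊢
  have hSb : q - (1 + (q - 1) * a ^ 2) = (q - 1) * (1 - a ^ 2) := by ring
  generalize 1 - a ^ 2 = b at hb hSb hβ ⊢
  generalize 1 + (q - 1) * a ^ 2 = S at hS hSb hβ ⊢
  have hexp : -(q * a ^ 2 / (2 * b)) * ‖x‖ ^ 2 +
      (q * a / b) ^ 2 * ‖x‖ ^ 2 / (4 * (S / (2 * b))) =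
      q * (q - 1) * a ^ 2 * ‖x‖ ^ 2 / (2 * S) := by
    field_simp
    linear_combination 4 * q * a ^ 2 * ‖x‖ ^ 2 * hSb
  rw [← two_pi_rpow_mul_rpow_mul_pi_div_rpow hb hS, ← hexp, Real.exp_add]
  ring

end Mehler

theorem rpow_mul_exp_le_exp {q a r : ℝ} (hq : 1 ≤ q) (ha : a ^ 2 ≤ 1) (hr : 0 ≤ r)
    (d : ℕ) :
    (1 + (q - 1) * a ^ 2) ^ (-(d : ℝ) / 2) *
        rexp (q * (q - 1) * a ^ 2 * r / (2 * (1 + (q - 1) * a ^ 2))) ≤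
      rexp ((q - 1) * r / 2) := by
  have hS : 1 ≤ 1 + (q - 1) * a ^ 2 := by nlinarith [sq_nonneg a]
  have hexp : q * (q - 1) * a ^ 2 * r / (2 * (1 + (q - 1) * a ^ 2)) ≤ (q - 1) * r / 2 := by
    rw [div_le_div_iff₀ (by positivity) two_pos]
    nlinarith [mul_nonneg (mul_nonneg (sub_nonneg.2 hq) hr) (sub_nonneg.2 ha)]
  have hpow : (1 + (q - 1) * a ^ 2) ^ (-(d : ℝ) / 2) ≤ 1 :=
    Real.rpow_le_one_of_one_le_of_nonpos hS (by have := Nat.cast_nonneg (α := ℝ) d; linarith)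
  exact (mul_le_of_le_one_left (Real.exp_nonneg _) hpow).trans (Real.exp_le_exp.2 hexp)

theorem mehler_q_integral_bound (d : ℕ) (q : ℝ) (hq : 2 ≤ q) (t : ℝ) (ht : 0 < t)
    (x : EuclideanSpace ℝ (Fin d)) :
    ∫⁻ y, ENNReal.ofReal (mehler d t x y ^ q) ∂(stdGaussian d) ≤
      ENNReal.ofReal
        ((1 - Real.exp (-t) ^ 2) ^ (-((q - 1) * d) / 2) * Real.exp ((q - 1) * ‖x‖ ^ 2 / 2)) := by
  rw [lintegral_mehler_rpow (by linarith) ht, mul_assoc]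
  have ha : rexp (-t) ^ 2 ≤ 1 := by linarith [one_sub_exp_neg_sq_pos ht]
  exact ENNReal.ofReal_le_ofReal (mul_le_mul_of_nonneg_left
    (rpow_mul_exp_le_exp (by linarith) ha (sq_nonneg _) d) (Real.rpow_nonneg (by linarith) _))
end

section
/- Let μ be the standard Gaussian measure on ℝ^d, d ≥ 3, let p ∈ [1, d), and let c ∈ (p/d, 1). Let X_1, …, X_n be i.i.d. with law μ, let R = √(2c log n), let μ^R be μ conditioned on the closed Euclidean ball B_R of radius R centered at 0, and define X_i^R = X_i if X_i ∈ B_R and X_i^R = Z_i otherwise, where Z_1, …, Z_n are i.i.d. with law μ^R and independent of the X_i. Set μ_n = (1/n)∑ δ_{X_i} and μ_n^R = (1/n)∑ δ_{X_i^R}. Then there is a constant C > 0 depending only on p, d, c such that for all n large enough, E[ W_p^p(μ_n, μ_n^R) ] ≤ C n^{−p/d}. -/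
open MeasureTheory ProbabilityTheory Filter Set

/-!
Couple `μ_n` and `μ_n^R` by pairing `X_i` with `X_i^R`. Since `‖Z_i‖ ≤ R < ‖X_i‖` whenever the two
differ, the cost is at most `2^p ‖X_i‖^p 𝟙{‖X_i‖ > R}`, and a Chernoff bound with the weight
`exp (t ‖x‖² / 2)`, `t < 1`, bounds its Gaussian expectation by `C e^{-t R² / 2} = C n^{-t c}`.
Taking `t = p / (d c)` gives the rate `n^{-p/d}`.
-/

open Real
open scoped ENNReal

section EmpiricalCoupling

variable {Ω : Type*} {d n : ℕ}

theorem wassersteinPow_empMeasure_le (p : ℝ) (X Y : Fin n → Ω → EuclideanSpace ℝ (Fin d))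
    (ω : Ω) :
    wassersteinPow d p (empMeasure X ω) (empMeasure Y ω) ≤
      (n : ℝ≥0∞)⁻¹ * ∑ i, ENNReal.ofReal (‖X i ω - Y i ω‖ ^ p) := by
  let coupling : Measure (EuclideanSpace ℝ (Fin d) × EuclideanSpace ℝ (Fin d)) :=
    (n : ℝ≥0∞)⁻¹ • ∑ i, Measure.dirac (X i ω, Y i ω)
  have map_coupling {f : _ → EuclideanSpace ℝ (Fin d)} (hf : Measurable f) :
      coupling.map f = (n : ℝ≥0∞)⁻¹ • ∑ i, Measure.dirac (f (X i ω, Y i ω)) := by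
    simp only [coupling, Measure.map_smul, Measure.map_finset_sum' hf.aemeasurable,
      Measure.map_dirac' hf]
  refine iInf_le_of_le coupling (iInf_le_of_le (map_coupling measurable_fst)
    (iInf_le_of_le (map_coupling measurable_snd) (le_of_eq ?_)))
  simp only [coupling, lintegral_smul_measure, lintegral_finsetSum_measure, lintegral_dirac,
    smul_eq_mul]

variable [MeasurableSpace Ω] {P : Measure Ω} {E : Type*} [MeasurableSpace E]

theorem lintegral_avg_comp_eq_of_map_eq (hn : n ≠ 0) {X : Fin n → Ω → E}
    (hXm : ∀ i, AEMeasurable (X i) P) {μ : Measure E} (hX : ∀ i, P.map (X i) = μ)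
    {g : E → ℝ≥0∞} (hg : Measurable g) :
    ∫⁻ ω, (n : ℝ≥0∞)⁻¹ * ∑ i, g (X i ω) ∂P = ∫⁻ x, g x ∂μ := by
  have h_each (i : Fin n) : ∫⁻ ω, g (X i ω) ∂P = ∫⁻ x, g x ∂μ := by
    rw [← hX i, lintegral_map' hg.aemeasurable (hXm i)]
  rw [lintegral_const_mul' _ _ (ENNReal.inv_ne_top.2 (Nat.cast_ne_zero.2 hn)),
    lintegral_finsetSum' (f := fun i ω => g (X i ω)) _
      fun i _ => hg.comp_aemeasurable (hXm i)]
  simp only [h_each, Finset.sum_const, Finset.card_univ, Fintype.card_fin, nsmul_eq_mul,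
    ← mul_assoc, ENNReal.inv_mul_cancel (Nat.cast_ne_zero.2 hn) (ENNReal.natCast_ne_top n),
    one_mul]

end EmpiricalCoupling

theorem rpow_le_exp_mul_sq_add {r p a : ℝ} (hr : 0 ≤ r) (hp : 0 ≤ p) (ha : 0 < a) :
    r ^ p ≤ exp (a * r ^ 2 + p ^ 2 / (4 * a)) := by
  have h_lin : r ^ p ≤ exp (p * r) := by
    rcases hr.eq_or_lt with rfl | hr
    · exact (zero_rpow_le_one p).trans (one_le_exp (by simp))
    · rw [rpow_def_of_pos hr, mul_comm]
      gcongr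
      linarith [log_le_sub_one_of_pos hr]
  have h_amgm : p * r ≤ a * r ^ 2 + p ^ 2 / (4 * a) := by
    have h_sq : a * r ^ 2 + p ^ 2 / (4 * a) - p * r = (2 * a * r - p) ^ 2 / (4 * a) := by
      field_simp
      ring
    linarith [h_sq ▸ (by positivity : 0 ≤ (2 * a * r - p) ^ 2 / (4 * a))]
  exact h_lin.trans (exp_le_exp.2 h_amgm)

theorem integrable_exp_neg_mul_sq_norm {V : Type*} [NormedAddCommGroup V] [InnerProductSpace ℝ V]
    [FiniteDimensional ℝ V] [MeasurableSpace V] [BorelSpace V] {b : ℝ} (hb : 0 < b) :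
    Integrable fun x : V => exp (-b * ‖x‖ ^ 2) :=
  .of_integral_ne_zero (by rw [GaussianFourier.integral_rexp_neg_mul_sq_norm hb]; positivity)

theorem lintegral_indicator_lt_norm_le {E : Type*} [NormedAddCommGroup E] [MeasurableSpace E]
    (μ : Measure E) {R t : ℝ} (hR : 0 ≤ R) (ht : 0 ≤ t) (f : E → ℝ≥0∞) :
    ∫⁻ x, {x | R < ‖x‖}.indicator f x ∂μ ≤
      ENNReal.ofReal (exp (-(t * R ^ 2) / 2)) *
        ∫⁻ x, f x * ENNReal.ofReal (exp (t * ‖x‖ ^ 2 / 2)) ∂μ := by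
  rw [← lintegral_const_mul' _ _ ENNReal.ofReal_ne_top]
  refine lintegral_mono fun x => ?_
  by_cases hx : R < ‖x‖
  · have h_weight : 1 ≤ exp (-(t * R ^ 2) / 2) * exp (t * ‖x‖ ^ 2 / 2) := by
      have h_sq : t * R ^ 2 ≤ t * ‖x‖ ^ 2 := by gcongr
      rw [← exp_add]
      exact one_le_exp (by linarith)
    rw [indicator_of_mem (show x ∈ {x | R < ‖x‖} from hx), mul_left_comm,
      ← ENNReal.ofReal_mul (by positivity)]
    exact le_mul_of_one_le_right' (ENNReal.one_le_ofReal.2 h_weight)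
  · rw [indicator_of_notMem (show x ∉ {x | R < ‖x‖} from hx)]
    exact zero_le

section Gaussian

variable {d : ℕ}

theorem lintegral_stdGaussian {f : EuclideanSpace ℝ (Fin d) → ℝ≥0∞} (hf : Measurable f) :
    ∫⁻ x, f x ∂_root_.stdGaussian d =
      ∫⁻ x, ENNReal.ofReal ((2 * π) ^ (-(d : ℝ) / 2) * exp (-‖x‖ ^ 2 / 2)) * f x :=
  lintegral_withDensity_eq_lintegral_mul _ (by fun_prop) hf

instance : IsProbabilityMeasure (_root_.stdGaussian d) := by
  have h_int : ∫ x : EuclideanSpace ℝ (Fin d), exp (-(1 / 2) * ‖x‖ ^ 2) =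
      (2 * π) ^ ((d : ℝ) / 2) := by
    rw [GaussianFourier.integral_rexp_neg_mul_sq_norm (by norm_num), finrank_euclideanSpace_fin]
    congr 1
    ring
  have h_dens (x : EuclideanSpace ℝ (Fin d)) : (2 * π) ^ (-(d : ℝ) / 2) * exp (-‖x‖ ^ 2 / 2) =
      (2 * π) ^ (-(d : ℝ) / 2) * exp (-(1 / 2) * ‖x‖ ^ 2) := by
    ring_nf
  constructor
  rw [_root_.stdGaussian, withDensity_apply _ .univ, Measure.restrict_univ]
  simp_rw [h_dens]
  rw [← ofReal_integral_eq_lintegral_ofReal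
      ((integrable_exp_neg_mul_sq_norm (by norm_num)).const_mul _)
      (ae_of_all _ fun _ => by positivity),
    integral_const_mul, h_int, ← rpow_add (by positivity), neg_div, neg_add_cancel, rpow_zero,
    ENNReal.ofReal_one]

theorem stdGaussian_eq_zero_iff {s : Set (EuclideanSpace ℝ (Fin d))} :
    _root_.stdGaussian d s = 0 ↔ volume s = 0 := by
  rw [_root_.stdGaussian, withDensity_apply_eq_zero' (by fun_prop)]
  have h_pos : {x : EuclideanSpace ℝ (Fin d) |
      ENNReal.ofReal ((2 * π) ^ (-(d : ℝ) / 2) * exp (-‖x‖ ^ 2 / 2)) ≠ 0} = univ := by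
    ext x
    simp only [ne_eq, ENNReal.ofReal_eq_zero, not_le, mem_ofPred_eq, mem_univ, iff_true]
    positivity
  rw [h_pos, univ_inter]

theorem lintegral_rpow_norm_mul_exp_sq_lt_top {p t : ℝ} (hp : 0 ≤ p) (ht : t < 1) :
    ∫⁻ x, ENNReal.ofReal (‖x‖ ^ p) * ENNReal.ofReal (exp (t * ‖x‖ ^ 2 / 2))
      ∂_root_.stdGaussian d < ⊤ := by
  set a := (1 - t) / 4
  have ha : 0 < a := by simp only [a]; linarith
  set K := (2 * π) ^ (-(d : ℝ) / 2)
  rw [lintegral_stdGaussian (by fun_prop)]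
  refine lt_of_le_of_lt (lintegral_mono fun x => ?_)
    ((integrable_exp_neg_mul_sq_norm ha).const_mul (K * exp (p ^ 2 / (4 * a)))).lintegral_lt_top
  rw [← ENNReal.ofReal_mul (by positivity), ← ENNReal.ofReal_mul (by positivity)]
  refine ENNReal.ofReal_le_ofReal ?_
  calc K * exp (-‖x‖ ^ 2 / 2) * (‖x‖ ^ p * exp (t * ‖x‖ ^ 2 / 2))
      ≤ K * exp (-‖x‖ ^ 2 / 2) *
          (exp (a * ‖x‖ ^ 2 + p ^ 2 / (4 * a)) * exp (t * ‖x‖ ^ 2 / 2)) := by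
        gcongr
        exact rpow_le_exp_mul_sq_add (norm_nonneg x) hp ha
    _ = K * exp (p ^ 2 / (4 * a)) * exp (-a * ‖x‖ ^ 2) := by
        simp only [mul_assoc, ← exp_add]
        congr 2
        simp only [a]
        ring

end Gaussian

section Localization

open Classical

theorem ofReal_norm_sub_localize_rpow_le {E : Type*} [NormedAddCommGroup E] {p R : ℝ}
    (hp : 0 < p) (x : E) {z : E} (hz : ‖z‖ ≤ R) :
    ENNReal.ofReal (‖x - if x ∈ Metric.closedBall 0 R then x else z‖ ^ p) ≤
      ENNReal.ofReal (2 ^ p) *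
        {y : E | R < ‖y‖}.indicator (fun y => ENNReal.ofReal (‖y‖ ^ p)) x := by
  by_cases hx : x ∈ Metric.closedBall 0 R
  · simp [hx, zero_rpow hp.ne']
  · have hRx : R < ‖x‖ := by simpa using hx
    rw [if_neg hx, indicator_of_mem (show x ∈ {y : E | R < ‖y‖} from hRx),
      ← ENNReal.ofReal_mul (by positivity), ← mul_rpow (by norm_num) (norm_nonneg x)]
    gcongr
    calc ‖x - z‖ ≤ ‖x‖ + ‖z‖ := norm_sub_le x z
      _ ≤ 2 * ‖x‖ := by linarith

theorem lintegral_wassersteinPow_localize_le {Ω : Type*} [MeasurableSpace Ω] {P : Measure Ω}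
    {d n : ℕ} (hn : n ≠ 0) {p R : ℝ} (hp : 0 < p) {X Z : Fin n → Ω → EuclideanSpace ℝ (Fin d)}
    (hXm : ∀ i, AEMeasurable (X i) P) {μ : Measure (EuclideanSpace ℝ (Fin d))}
    (hX : ∀ i, P.map (X i) = μ) (hZ : ∀ i, ∀ᵐ ω ∂P, ‖Z i ω‖ ≤ R) :
    ∫⁻ ω, wassersteinPow d p (empMeasure X ω)
        (empMeasure (fun i ω => if X i ω ∈ Metric.closedBall 0 R then X i ω else Z i ω) ω) ∂P ≤
      ENNReal.ofReal (2 ^ p) *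
        ∫⁻ x, {y | R < ‖y‖}.indicator (fun y => ENNReal.ofReal (‖y‖ ^ p)) x ∂μ := by
  have h_tail_meas : Measurable ({y : EuclideanSpace ℝ (Fin d) | R < ‖y‖}.indicator
      fun y => ENNReal.ofReal (‖y‖ ^ p)) :=
    (by fun_prop : Measurable _).indicator (measurableSet_lt measurable_const measurable_norm)
  rw [← lintegral_const_mul _ h_tail_meas,
    ← lintegral_avg_comp_eq_of_map_eq hn hXm hX (h_tail_meas.const_mul _)]
  refine lintegral_mono_ae ?_
  filter_upwards [ae_all_iff.2 hZ] with ω hω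
  refine (wassersteinPow_empMeasure_le p X _ ω).trans ?_
  gcongr with i
  exact ofReal_norm_sub_localize_rpow_le hp _ (hω i)

end Localization

theorem ae_mem_of_map_eq_cond {Ω α : Type*} [MeasurableSpace Ω] [MeasurableSpace α]
    {P : Measure Ω} {μ : Measure α} [IsFiniteMeasure μ] {s : Set α} (hs : MeasurableSet s)
    (hμs : μ s ≠ 0) {Z : Ω → α} (hZ : P.map Z = μ[|s]) :
    ∀ᵐ ω ∂P, Z ω ∈ s := by
  have : IsProbabilityMeasure (μ[|s]) := cond_isProbabilityMeasure hμs
  have hZm : AEMeasurable Z P := .of_map_ne_zero (hZ ▸ IsProbabilityMeasure.ne_zero _)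
  exact ae_of_ae_map hZm (hZ ▸ ae_cond_mem hs)

open Classical in
theorem localization_cost_general (d : ℕ) (p c : ℝ)
    (hp : 1 ≤ p) (hc₁ : p / d < c) :
    ∃ C : ℝ, 0 < C ∧ ∃ N : ℕ, ∀ (n : ℕ), N ≤ n →
      ∀ (Ω : Type) (_ : MeasurableSpace Ω) (P : Measure Ω), IsProbabilityMeasure P →
        ∀ (X Z : Fin n → Ω → EuclideanSpace ℝ (Fin d)),
          iIndepFun (Sum.elim X Z) P →
          (∀ i, Measure.map (X i) P = stdGaussian d) →
          (∀ i, Measure.map (Z i) P =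
              (stdGaussian d)[|Metric.closedBall 0 (Real.sqrt (2 * c * Real.log n))]) →
          ∫⁻ ω, wassersteinPow d p (empMeasure X ω)
              (empMeasure
                (fun i ω' =>
                  if X i ω' ∈ Metric.closedBall (0 : EuclideanSpace ℝ (Fin d))
                      (Real.sqrt (2 * c * Real.log n)) then X i ω' else Z i ω') ω) ∂P ≤
            ENNReal.ofReal (C * (n : ℝ) ^ (-(p / d))) := by
  have hp0 : 0 < p := by linarith
  have hc : 0 < c := (div_nonneg hp0.le d.cast_nonneg).trans_lt hc₁
  set t := p / d / c
  have ht0 : 0 ≤ t := by positivity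
  have ht1 : t < 1 := (div_lt_one hc).2 hc₁
  set M := ∫⁻ x, ENNReal.ofReal (‖x‖ ^ p) * ENNReal.ofReal (exp (t * ‖x‖ ^ 2 / 2))
    ∂_root_.stdGaussian d
  have hM : M ≠ ⊤ := (lintegral_rpow_norm_mul_exp_sq_lt_top hp0.le ht1).ne
  refine ⟨2 ^ p * M.toReal + 1, by positivity, 2, fun n hn Ω _ P _ X Z _ hX hZ => ?_⟩
  set R := √(2 * c * log n)
  have hlog : 0 < log n := log_pos (by exact_mod_cast hn)
  have hR : 0 < R := sqrt_pos.2 (by positivity)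
  have hZR (i : Fin n) : ∀ᵐ ω ∂P, ‖Z i ω‖ ≤ R := by
    simpa using ae_mem_of_map_eq_cond measurableSet_closedBall
      (stdGaussian_eq_zero_iff.not.2 (Metric.measure_closedBall_pos _ _ hR).ne') (hZ i)
  have hXm (i : Fin n) : AEMeasurable (X i) P :=
    .of_map_ne_zero (by rw [hX i]; exact IsProbabilityMeasure.ne_zero _)
  have h_decay : exp (-(t * R ^ 2) / 2) = (n : ℝ) ^ (-(p / d)) := by
    rw [rpow_def_of_pos (by positivity), sq_sqrt (by positivity)]
    congr 1
    simp only [t]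
    field_simp
  calc _ ≤ ENNReal.ofReal (2 ^ p) *
          ∫⁻ x, {y | R < ‖y‖}.indicator (fun y => ENNReal.ofReal (‖y‖ ^ p)) x
            ∂_root_.stdGaussian d :=
        lintegral_wassersteinPow_localize_le (by omega) hp0 hXm hX hZR
    _ ≤ ENNReal.ofReal (2 ^ p) * (ENNReal.ofReal (exp (-(t * R ^ 2) / 2)) * M) := by
        gcongr
        exact lintegral_indicator_lt_norm_le _ hR.le ht0 _
    _ = ENNReal.ofReal (2 ^ p * M.toReal * (n : ℝ) ^ (-(p / d))) := by
        rw [h_decay, ← ENNReal.ofReal_toReal hM, ← ENNReal.ofReal_mul (by positivity),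
          ← ENNReal.ofReal_mul (by positivity), ENNReal.toReal_ofReal ENNReal.toReal_nonneg]
        ring_nf
    _ ≤ ENNReal.ofReal ((2 ^ p * M.toReal + 1) * (n : ℝ) ^ (-(p / d))) := by
        gcongr
        linarith

open Classical in
theorem localization_cost (d : ℕ) (hd : 3 ≤ d) (p c : ℝ)
    (hp : 1 ≤ p) (hpd : p < d) (hc₁ : p / d < c) (hc₂ : c < 1) :
    ∃ C : ℝ, 0 < C ∧ ∃ N : ℕ, ∀ (n : ℕ), N ≤ n →
      ∀ (Ω : Type) (_ : MeasurableSpace Ω) (P : Measure Ω), IsProbabilityMeasure P →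
        ∀ (X Z : Fin n → Ω → EuclideanSpace ℝ (Fin d)),
          iIndepFun (Sum.elim X Z) P →
          (∀ i, Measure.map (X i) P = stdGaussian d) →
          (∀ i, Measure.map (Z i) P =
              (stdGaussian d)[|Metric.closedBall 0 (Real.sqrt (2 * c * Real.log n))]) →
          ∫⁻ ω, wassersteinPow d p (empMeasure X ω)
              (empMeasure
                (fun i ω' =>
                  if X i ω' ∈ Metric.closedBall (0 : EuclideanSpace ℝ (Fin d))
                      (Real.sqrt (2 * c * Real.log n)) then X i ω' else Z i ω') ω) ∂P ≤
            ENNReal.ofReal (C * (n : ℝ) ^ (-(p / d))) :=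
  localization_cost_general d p c hp hc₁
end

section
/- Let μ be the standard Gaussian measure on ℝ^d, let t > 0, s > 0, s' > 0, and set a = e^{−(s+t)}, b = e^{−(s'+t)}, α² = 1 + a²/(1 − a²) + b²/(1 − b²) (with α > 0) and β = a/(1 − a²) + b/(1 − b²). Then for every Borel set A ⊂ ℝ^d and every y ∈ ℝ^d, ∫_A p_{s+t}(x,y) · p_{s'+t}(x,y) dμ(x) = p_{s+s'+2t}(y,y) · μ( −(β/α) y + α A ), where −(β/α) y + α A denotes the image of A under the affine map x ↦ α x − (β/α) y. Moreover α²/β − 1 = (1 − a)(1 − b)/(a + b). -/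
open MeasureTheory ProbabilityTheory Filter Set

open Real

/-! Multiplying the Gaussian density by `p_u(x, y) p_v(x, y)` gives a Gaussian in `x`: with
`a = e^{-u}`, `b = e^{-v}` the coefficients of `‖x‖²` and `⟪x, y⟫` in the exponent are `-α²/2`
and `β`, so completing the square leaves `exp (-‖α x - (β/α) y‖² / 2)` times a function of `y`.
That function is `p_{u+v}(y, y)` because `(1 - a²)(1 - b²) α² = 1 - (ab)²` and
`(β/α)² = a²/(1-a²) + b²/(1-b²) + 2ab/(1+ab)`; the first identity also absorbs the Jacobian `α^d`
of `x ↦ α x - (β/α) y`, and the change of variables formula turns the integral over `A` into the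
Gaussian measure of the image of `A`. -/

theorem norm_smul_sub_smul_sq {E : Type*} [NormedAddCommGroup E] [InnerProductSpace ℝ E]
    {α : ℝ} (hα : α ≠ 0) (β : ℝ) (x y : E) :
    ‖α • x - (β / α) • y‖ ^ 2 = α ^ 2 * ‖x‖ ^ 2 - 2 * β * inner ℝ x y + (β / α) ^ 2 * ‖y‖ ^ 2 := by
  rw [norm_sub_sq_real, norm_smul, norm_smul, real_inner_smul_left, real_inner_smul_right,
    mul_pow, mul_pow, Real.norm_eq_abs, Real.norm_eq_abs, sq_abs, sq_abs]
  field_simp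

theorem ContinuousLinearMap.det_smul_id {E : Type*} [NormedAddCommGroup E] [NormedSpace ℝ E]
    [FiniteDimensional ℝ E] (c : ℝ) :
    (c • ContinuousLinearMap.id ℝ E).det = c ^ Module.finrank ℝ E := by
  simp [ContinuousLinearMap.det, LinearMap.det_smul]

theorem rpow_neg_half_mul_rpow_neg_half {p q r α : ℝ} (hp : 0 < p) (hq : 0 < q) (hr : 0 < r)
    (hα : 0 ≤ α) (hα2 : α ^ 2 = r / (p * q)) (n : ℕ) :
    p ^ (-(n : ℝ) / 2) * q ^ (-(n : ℝ) / 2) = r ^ (-(n : ℝ) / 2) * α ^ n := by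
  have hαn : α ^ n = (r / (p * q)) ^ ((n : ℝ) / 2) := by
    rw [← hα2, ← Real.rpow_natCast α 2, ← Real.rpow_mul hα, ← Real.rpow_natCast]
    congr 1; push_cast; ring
  rw [hαn, Real.div_rpow hr.le (by positivity), Real.mul_rpow hp.le hq.le, neg_div,
    Real.rpow_neg hp.le, Real.rpow_neg hq.le, Real.rpow_neg hr.le]
  have : r ^ ((n : ℝ) / 2) ≠ 0 := by positivity
  field_simp

theorem one_add_sq_div_add_sq_div {a b : ℝ} (ha : 1 - a ^ 2 ≠ 0) (hb : 1 - b ^ 2 ≠ 0) :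
    1 + a ^ 2 / (1 - a ^ 2) + b ^ 2 / (1 - b ^ 2) =
      (1 - (a * b) ^ 2) / ((1 - a ^ 2) * (1 - b ^ 2)) := by
  field_simp; ring

theorem div_one_sub_sq_add_div_one_sub_sq {a b : ℝ} (ha : 1 - a ^ 2 ≠ 0) (hb : 1 - b ^ 2 ≠ 0) :
    a / (1 - a ^ 2) + b / (1 - b ^ 2) = (a + b) * (1 - a * b) / ((1 - a ^ 2) * (1 - b ^ 2)) := by
  field_simp; ring

section Coefficients

variable {E : Type*} [NormedAddCommGroup E] [InnerProductSpace ℝ E]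

noncomputable def mehlerExponent (a : ℝ) (x y : E) : ℝ :=
  -(a ^ 2 / (1 - a ^ 2) * (‖x‖ ^ 2 + ‖y‖ ^ 2) - 2 * (a / (1 - a ^ 2)) * inner ℝ x y) / 2

variable {a b α β : ℝ} (ha : 1 - a ^ 2 ≠ 0) (hb : 1 - b ^ 2 ≠ 0) (hab : 1 - (a * b) ^ 2 ≠ 0)
  (hα2 : α ^ 2 = 1 + a ^ 2 / (1 - a ^ 2) + b ^ 2 / (1 - b ^ 2))
  (hβ : β = a / (1 - a ^ 2) + b / (1 - b ^ 2))
include ha hb hab hα2 hβ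

theorem div_sq_eq_of_mehler_coeffs :
    (β / α) ^ 2 = a ^ 2 / (1 - a ^ 2) + b ^ 2 / (1 - b ^ 2) +
      2 * (a * b / (1 - (a * b) ^ 2) - (a * b) ^ 2 / (1 - (a * b) ^ 2)) := by
  rw [one_add_sq_div_add_sq_div ha hb] at hα2
  rw [div_one_sub_sq_add_div_one_sub_sq ha hb] at hβ
  have hα : α ^ 2 ≠ 0 := by rw [hα2]; positivity
  rw [mul_pow] at hab hα2 ⊢
  rw [div_pow, hα2, hβ]
  field_simp
  ring

theorem mehlerExponent_add_mehlerExponent_eq (hα : α ≠ 0) (x y : E) :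
    -‖x‖ ^ 2 / 2 + mehlerExponent a x y + mehlerExponent b x y =
      mehlerExponent (a * b) y y + -‖α • x - (β / α) • y‖ ^ 2 / 2 := by
  unfold mehlerExponent
  rw [norm_smul_sub_smul_sq hα, real_inner_self_eq_norm_sq,
    div_sq_eq_of_mehler_coeffs ha hb hab hα2 hβ, hα2, hβ]
  ring

theorem mehler_alpha_sq_div_beta_sub_one (hapb : a + b ≠ 0) :
    α ^ 2 / β - 1 = (1 - a) * (1 - b) / (a + b) := by
  rw [one_add_sq_div_add_sq_div ha hb] at hα2
  rw [div_one_sub_sq_add_div_one_sub_sq ha hb] at hβ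
  have h1 : 1 - a * b ≠ 0 := fun h => hab (by linear_combination (1 + a * b) * h)
  rw [hα2, hβ]
  field_simp
  ring

end Coefficients

theorem one_sub_exp_neg_sq_pos_s15 {u : ℝ} (hu : 0 < u) : 0 < 1 - exp (-u) ^ 2 := by
  rw [← exp_nat_mul, sub_pos, exp_lt_one_iff]
  push_cast
  linarith

theorem mehler_eq_of_exp_neg {d : ℕ} {t a : ℝ} (ha : a = exp (-t))
    (x y : EuclideanSpace ℝ (Fin d)) :
    mehler d t x y = (1 - a ^ 2) ^ (-(d : ℝ) / 2) * exp (mehlerExponent a x y) := by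
  have ha2 : exp (-2 * t) = a ^ 2 := by rw [ha, ← exp_nat_mul]; ring_nf
  have ha_inv : exp t = a⁻¹ := by rw [ha, exp_neg, inv_inv]
  have ha0 : a ≠ 0 := ha ▸ (exp_pos _).ne'
  rw [mehler, mehlerExponent, ha2, ha_inv]
  congr 2
  field_simp

section Density

variable (d : ℕ)

noncomputable def stdGaussianDensity (x : EuclideanSpace ℝ (Fin d)) : ℝ :=
  (2 * π) ^ (-(d : ℝ) / 2) * exp (-‖x‖ ^ 2 / 2)

theorem stdGaussianDensity_nonneg (x : EuclideanSpace ℝ (Fin d)) :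
    0 ≤ stdGaussianDensity d x := by
  unfold stdGaussianDensity; positivity

@[fun_prop]
theorem continuous_stdGaussianDensity : Continuous (stdGaussianDensity d) := by
  unfold stdGaussianDensity; fun_prop

theorem stdGaussian_eq_withDensity :
    stdGaussian d = volume.withDensity fun x => ENNReal.ofReal (stdGaussianDensity d x) := rfl

variable {d}

theorem setIntegral_stdGaussian {A : Set (EuclideanSpace ℝ (Fin d))} (hA : MeasurableSet A)
    (f : EuclideanSpace ℝ (Fin d) → ℝ) :
    ∫ x in A, f x ∂stdGaussian d = ∫ x in A, stdGaussianDensity d x * f x := by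
  rw [stdGaussian_eq_withDensity, setIntegral_withDensity_eq_setIntegral_toReal_smul
    (continuous_stdGaussianDensity d).measurable.ennreal_ofReal
    (ae_of_all _ fun _ => ENNReal.ofReal_lt_top) _ hA]
  simp only [ENNReal.toReal_ofReal (stdGaussianDensity_nonneg d _), smul_eq_mul]

theorem stdGaussian_image_smul_sub {α : ℝ} (hα : α ≠ 0) (v : EuclideanSpace ℝ (Fin d))
    {A : Set (EuclideanSpace ℝ (Fin d))} (hA : MeasurableSet A) :
    (stdGaussian d ((fun x => α • x - v) '' A)).toReal =
      ∫ x in A, |α| ^ d * stdGaussianDensity d (α • x - v) := by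
  have hderiv : ∀ x ∈ A, HasFDerivWithinAt (fun x => α • x - v)
      (α • ContinuousLinearMap.id ℝ (EuclideanSpace ℝ (Fin d))) A x := fun x _ =>
    ((hasFDerivAt_id x).const_smul α).sub_const v |>.hasFDerivWithinAt
  have hinj : InjOn (fun x : EuclideanSpace ℝ (Fin d) => α • x - v) A := fun x _ y _ hxy =>
    smul_right_injective _ hα (sub_left_inj.mp hxy)
  rw [stdGaussian_eq_withDensity, withDensity_apply' _ _,
    lintegral_image_eq_lintegral_abs_det_fderiv_mul volume hA hderiv hinj,
    ContinuousLinearMap.det_smul_id, finrank_euclideanSpace_fin]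
  simp_rw [← ENNReal.ofReal_mul (abs_nonneg _), abs_pow]
  rw [← integral_eq_lintegral_of_nonneg_ae]
  · exact ae_of_all _ fun _ => mul_nonneg (by positivity) (stdGaussianDensity_nonneg d _)
  · fun_prop

end Density

theorem stdGaussianDensity_mul_mehler_mul_mehler {d : ℕ} {u v a b α β : ℝ} (hu : 0 < u)
    (hv : 0 < v) (ha : a = exp (-u)) (hb : b = exp (-v)) (hα : 0 < α)
    (hα2 : α ^ 2 = 1 + a ^ 2 / (1 - a ^ 2) + b ^ 2 / (1 - b ^ 2))
    (hβ : β = a / (1 - a ^ 2) + b / (1 - b ^ 2)) (x y : EuclideanSpace ℝ (Fin d)) :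
    stdGaussianDensity d x * (mehler d u x y * mehler d v x y) =
      mehler d (u + v) y y * (α ^ d * stdGaussianDensity d (α • x - (β / α) • y)) := by
  have hab : a * b = exp (-(u + v)) := by rw [ha, hb, ← exp_add, neg_add]
  have ha1 : 0 < 1 - a ^ 2 := ha ▸ one_sub_exp_neg_sq_pos_s15 hu
  have hb1 : 0 < 1 - b ^ 2 := hb ▸ one_sub_exp_neg_sq_pos_s15 hv
  have hab1 : 0 < 1 - (a * b) ^ 2 := hab ▸ one_sub_exp_neg_sq_pos_s15 (add_pos hu hv)
  have hprefactor := rpow_neg_half_mul_rpow_neg_half ha1 hb1 hab1 hα.le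
    ((one_add_sq_div_add_sq_div ha1.ne' hb1.ne').symm ▸ hα2) d
  have hexponent :=
    mehlerExponent_add_mehlerExponent_eq ha1.ne' hb1.ne' hab1.ne' hα2 hβ hα.ne' x y
  simp only [mehler_eq_of_exp_neg ha, mehler_eq_of_exp_neg hb, mehler_eq_of_exp_neg hab,
    stdGaussianDensity]
  calc _ = (2 * π) ^ (-(d : ℝ) / 2) *
        ((1 - a ^ 2) ^ (-(d : ℝ) / 2) * (1 - b ^ 2) ^ (-(d : ℝ) / 2)) *
        exp (-‖x‖ ^ 2 / 2 + mehlerExponent a x y + mehlerExponent b x y) := by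
        simp only [exp_add]; ring
    _ = _ := by
        rw [hprefactor, hexponent, exp_add]; ring

theorem mehler_product_formula (d : ℕ) (t s s' : ℝ) (ht : 0 < t) (hs : 0 < s) (hs' : 0 < s')
    (a b α β : ℝ) (ha : a = Real.exp (-(s + t))) (hb : b = Real.exp (-(s' + t)))
    (hα : α = Real.sqrt (1 + a ^ 2 / (1 - a ^ 2) + b ^ 2 / (1 - b ^ 2)))
    (hβ : β = a / (1 - a ^ 2) + b / (1 - b ^ 2)) :
    (∀ (A : Set (EuclideanSpace ℝ (Fin d))), MeasurableSet A →
        ∀ y : EuclideanSpace ℝ (Fin d),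
          ∫ x in A, mehler d (s + t) x y * mehler d (s' + t) x y ∂(stdGaussian d) =
            mehler d (s + s' + 2 * t) y y *
              (stdGaussian d ((fun x => α • x - (β / α) • y) '' A)).toReal) ∧
      α ^ 2 / β - 1 = (1 - a) * (1 - b) / (a + b) := by
  have hst : 0 < s + t := by linarith
  have hs't : 0 < s' + t := by linarith
  have ha1 : 0 < 1 - a ^ 2 := ha ▸ one_sub_exp_neg_sq_pos_s15 hst
  have hb1 : 0 < 1 - b ^ 2 := hb ▸ one_sub_exp_neg_sq_pos_s15 hs't
  have hab1 : 0 < 1 - (a * b) ^ 2 := by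
    rw [ha, hb, ← exp_add, ← neg_add]
    exact one_sub_exp_neg_sq_pos_s15 (add_pos hst hs't)
  have hα2_pos : 0 < 1 + a ^ 2 / (1 - a ^ 2) + b ^ 2 / (1 - b ^ 2) := by
    rw [one_add_sq_div_add_sq_div ha1.ne' hb1.ne']
    exact div_pos hab1 (mul_pos ha1 hb1)
  have hα2 : α ^ 2 = 1 + a ^ 2 / (1 - a ^ 2) + b ^ 2 / (1 - b ^ 2) := hα ▸ sq_sqrt hα2_pos.le
  have hα0 : 0 < α := hα ▸ sqrt_pos.mpr hα2_pos
  refine ⟨fun A hA y => ?_, ?_⟩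
  · rw [setIntegral_stdGaussian hA, stdGaussian_image_smul_sub hα0.ne' _ hA,
      ← integral_const_mul]
    refine setIntegral_congr_fun hA fun x _ => ?_
    rw [abs_of_pos hα0, show s + s' + 2 * t = (s + t) + (s' + t) by ring]
    exact stdGaussianDensity_mul_mehler_mul_mehler hst hs't ha hb hα0 hα2 hβ x y
  · have hapb : a + b ≠ 0 := by rw [ha, hb]; positivity
    exact mehler_alpha_sq_div_beta_sub_one ha1.ne' hb1.ne' hab1.ne' hα2 hβ hapb
end
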